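/- arXiv:2312.14793 — 5 statements merged into one kernel-verified Lean document; each statement's English description precedes it below -/
import Mathlib

section
/- Let Ω, q, u_s, u_r be a binary-action information transmission setting and let P : Ω → [0,1] be an outcome. Then P is sender-incentive-compatible and receiver-obedient if and only if P satisfies conditions (a), (b) and (c). (This is the characterization, via canonical strategies, of the outcomes of Nash equilibria of the mediated extension of a binary-action information transmission game.) -/
open Finset

/-- P is sender-incentive-compatible. -/
def senderIC {Ω : Type*} (us : Ω → Fin 2 → ℝ) (P : Ω → ℝ) : Prop :=
  ∀ ω ω' : Ω, P ω * us ω 0 + (1 - P ω) * us ω 1 ≥ P ω' * us ω 0 + (1 - P ω') * us ω 1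

/-- P is receiver-obedient. -/
def receiverObedient {Ω : Type*} [Fintype Ω] (q : Ω → ℝ) (ur : Ω → Fin 2 → ℝ)
    (P : Ω → ℝ) : Prop :=
  (∑ ω, q ω * P ω * (ur ω 0 - ur ω 1)) ≥ 0 ∧
  (∑ ω, q ω * (1 - P ω) * (ur ω 1 - ur ω 0)) ≥ 0

/-- Expected receiver utility of outcome P. -/
def Ur {Ω : Type*} [Fintype Ω] (q : Ω → ℝ) (ur : Ω → Fin 2 → ℝ) (P : Ω → ℝ) : ℝ :=
  ∑ ω, q ω * (P ω * ur ω 0 + (1 - P ω) * ur ω 1)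

/-- Condition (a). -/
def condA {Ω : Type*} (us : Ω → Fin 2 → ℝ) (P : Ω → ℝ) : Prop :=
  ∀ ω : Ω, us ω 0 > us ω 1 → ∀ ω' : Ω, P ω ≥ P ω'

/-- Condition (b). -/
def condB {Ω : Type*} (us : Ω → Fin 2 → ℝ) (P : Ω → ℝ) : Prop :=
  ∀ ω : Ω, us ω 0 < us ω 1 → ∀ ω' : Ω, P ω ≤ P ω'

/-- Condition (c). -/
def condC {Ω : Type*} [Fintype Ω] (q : Ω → ℝ) (ur : Ω → Fin 2 → ℝ) (P : Ω → ℝ) : Prop :=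
  Ur q ur P ≥ max (∑ ω, q ω * ur ω 0) (∑ ω, q ω * ur ω 1)

/-- An outcome of a binary-action information transmission game is the outcome of a Nash
equilibrium of the mediated extension (i.e., is sender-incentive-compatible and
receiver-obedient) iff it satisfies conditions (a), (b) and (c). -/
theorem stmt_0 {Ω : Type*} [Fintype Ω] [Nonempty Ω]
    (q : Ω → ℝ) (hq0 : ∀ ω, 0 ≤ q ω) (hq1 : ∑ ω, q ω = 1)
    (us ur : Ω → Fin 2 → ℝ)
    (P : Ω → ℝ) (hP : ∀ ω, P ω ∈ Set.Icc (0 : ℝ) 1) :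
    (senderIC us P ∧ receiverObedient q ur P) ↔
      (condA us P ∧ condB us P ∧ condC q ur P) := by

  have h1 : Ur q ur P - (∑ ω, q ω * ur ω 1) = ∑ ω, q ω * P ω * (ur ω 0 - ur ω 1) := by
    rw [Ur, ← Finset.sum_sub_distrib]
    exact Finset.sum_congr rfl (fun ω _ => by ring)
  have h2 : Ur q ur P - (∑ ω, q ω * ur ω 0) = ∑ ω, q ω * (1 - P ω) * (ur ω 1 - ur ω 0) := by
    rw [Ur, ← Finset.sum_sub_distrib]
    exact Finset.sum_congr rfl (fun ω _ => by ring)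
  constructor
  · rintro ⟨hic, ho1, ho2⟩
    refine ⟨fun ω h ω' => ?_, fun ω h ω' => ?_, ?_⟩
    · have := hic ω ω'; nlinarith
    · have := hic ω ω'; nlinarith
    · rw [condC, ge_iff_le, max_le_iff]
      constructor
      · nlinarith [ho2]
      · nlinarith [ho1]
  · rintro ⟨ha, hb, hc⟩
    have hc' := hc
    rw [condC, ge_iff_le, max_le_iff] at hc'
    refine ⟨fun ω ω' => ?_, ?_, ?_⟩
    · rcases lt_trichotomy (us ω 0) (us ω 1) with h | h | h
      · have := hb ω h ω'; nlinarith
      · have e : P ω * us ω 0 + (1 - P ω) * us ω 1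
            = P ω' * us ω 0 + (1 - P ω') * us ω 1 := by rw [h]; ring
        linarith [e.ge]
      · have := ha ω h ω'; nlinarith
    · nlinarith [hc'.2]
    · nlinarith [hc'.1]
end

section
/- Let Ω, q, u_s, u_r be a binary-action information transmission setting in which no ω ∈ Ω satisfies u_s(ω,0) = u_s(ω,1). If B₀ < 0 or B₁ > 0, then every outcome P : Ω → [0,1] satisfying conditions (a), (b) and (c) is constant, i.e., P(ω) = P(ω') for all ω, ω' ∈ Ω. -/
open Finset

/-- Expected sender utility of outcome P. -/
def Us {Ω : Type*} [Fintype Ω] (q : Ω → ℝ) (us : Ω → Fin 2 → ℝ) (P : Ω → ℝ) : ℝ :=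
  ∑ ω, q ω * (P ω * us ω 0 + (1 - P ω) * us ω 1)

/-- B₀: aggregate receiver preference for 0 over 1 on types where the sender prefers 0. -/
noncomputable def B0 {Ω : Type*} [Fintype Ω] (q : Ω → ℝ) (us ur : Ω → Fin 2 → ℝ) : ℝ :=
  ∑ ω, if us ω 0 > us ω 1 then q ω * (ur ω 0 - ur ω 1) else 0

/-- B₁: aggregate receiver preference for 0 over 1 on types where the sender prefers 1. -/
noncomputable def B1 {Ω : Type*} [Fintype Ω] (q : Ω → ℝ) (us ur : Ω → Fin 2 → ℝ) : ℝ :=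
  ∑ ω, if us ω 0 < us ω 1 then q ω * (ur ω 0 - ur ω 1) else 0

lemma aux_arith (B0 B1 p0 p1 : ℝ) (hp1 : 0 ≤ p1) (hp0 : p0 ≤ 1) (hle : p1 ≤ p0)
    (h1 : p0*B0 + p1*B1 ≥ 0) (h2 : p0*B0 + p1*B1 ≥ B0 + B1)
    (hB : B0 < 0 ∨ 0 < B1) : p0 = p1 := by
  by_contra h
  have hlt : p1 < p0 := lt_of_le_of_ne hle (fun e => h e.symm)
  rcases hB with hb | hb
  · nlinarith [mul_pos (sub_pos.mpr hlt) (neg_pos.mpr hb), mul_nonneg hp1 (le_of_lt (show (0:ℝ) < B0 + B1 by nlinarith [mul_pos (sub_pos.mpr hlt) (neg_pos.mpr hb)])), mul_le_mul_of_nonneg_right hle (le_of_lt (show (0:ℝ) < B1 by nlinarith [mul_pos (sub_pos.mpr hlt) (neg_pos.mpr hb)]))]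
  · nlinarith [mul_pos (sub_pos.mpr hlt) hb, mul_nonneg (sub_nonneg.mpr hp0) (le_of_lt hb)]

lemma aux_main {Ω : Type*} [Fintype Ω]
    (q : Ω → ℝ) (us ur : Ω → Fin 2 → ℝ)
    (hne : ∀ ω : Ω, us ω 0 ≠ us ω 1)
    (hB : B0 q us ur < 0 ∨ B1 q us ur > 0)
    (P : Ω → ℝ) (hP : ∀ ω, P ω ∈ Set.Icc (0 : ℝ) 1)
    (ha : condA us P) (hb : condB us P) (hc : condC q ur P)
    (ω0 ω1 : Ω) (h0 : us ω0 0 > us ω0 1) (h1 : us ω1 0 < us ω1 1) :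
    P ω0 = P ω1 := by
  set p0 := P ω0
  set p1 := P ω1
  have key : ∀ ω : Ω, P ω = if us ω 0 > us ω 1 then p0 else p1 := by
    intro ω
    by_cases hω : us ω 0 > us ω 1
    · rw [if_pos hω]; exact le_antisymm (ha ω0 h0 ω) (ha ω hω ω0)
    · rw [if_neg hω]
      have hω' : us ω 0 < us ω 1 := lt_of_le_of_ne (not_lt.mp hω) (hne ω)
      exact le_antisymm (hb ω hω' ω1) (hb ω1 h1 ω)
  have hS : ∑ ω, q ω * P ω * (ur ω 0 - ur ω 1) = p0 * B0 q us ur + p1 * B1 q us ur := by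
    rw [B0, B1, Finset.mul_sum, Finset.mul_sum, ← Finset.sum_add_distrib]
    apply Finset.sum_congr rfl
    intro ω _
    rw [key ω]
    by_cases hω : us ω 0 > us ω 1
    · rw [if_pos hω, if_pos hω, if_neg (not_lt.mpr (le_of_lt hω))]; ring
    · have hω' : us ω 0 < us ω 1 := lt_of_le_of_ne (not_lt.mp hω) (hne ω)
      rw [if_neg hω, if_neg hω, if_pos hω']; ring
  have hT : ∑ ω, q ω * (ur ω 0 - ur ω 1) = B0 q us ur + B1 q us ur := by
    rw [B0, B1, ← Finset.sum_add_distrib]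
    apply Finset.sum_congr rfl
    intro ω _
    by_cases hω : us ω 0 > us ω 1
    · rw [if_pos hω, if_neg (not_lt.mpr (le_of_lt hω))]; ring
    · have hω' : us ω 0 < us ω 1 := lt_of_le_of_ne (not_lt.mp hω) (hne ω)
      rw [if_neg hω, if_pos hω']; ring
  have hU1 : Ur q ur P = (∑ ω, q ω * ur ω 1) + ∑ ω, q ω * P ω * (ur ω 0 - ur ω 1) := by
    rw [Ur, ← Finset.sum_add_distrib]
    exact Finset.sum_congr rfl fun ω _ => by ring
  have hU0 : ∑ ω, q ω * ur ω 0 = (∑ ω, q ω * ur ω 1) + ∑ ω, q ω * (ur ω 0 - ur ω 1) := by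
    rw [← Finset.sum_add_distrib]
    exact Finset.sum_congr rfl fun ω _ => by ring
  have hc0 : Ur q ur P ≥ ∑ ω, q ω * ur ω 0 := le_trans (le_max_left _ _) hc
  have hc1 : Ur q ur P ≥ ∑ ω, q ω * ur ω 1 := le_trans (le_max_right _ _) hc
  exact aux_arith (B0 q us ur) (B1 q us ur) p0 p1 (hP ω1).1 (hP ω0).2 (ha ω0 h0 ω1)
    (by linarith) (by linarith) hB

/-- If B₀ < 0 or B₁ > 0 (and the sender is never indifferent), every outcome satisfying
conditions (a), (b), (c) is constant. -/
theorem stmt_1 {Ω : Type*} [Fintype Ω] [Nonempty Ω]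
    (q : Ω → ℝ) (hq0 : ∀ ω, 0 ≤ q ω) (hq1 : ∑ ω, q ω = 1)
    (us ur : Ω → Fin 2 → ℝ)
    (hne : ∀ ω : Ω, us ω 0 ≠ us ω 1)
    (hB : B0 q us ur < 0 ∨ B1 q us ur > 0)
    (P : Ω → ℝ) (hP : ∀ ω, P ω ∈ Set.Icc (0 : ℝ) 1)
    (ha : condA us P) (hb : condB us P) (hc : condC q ur P) :
    ∀ ω ω' : Ω, P ω = P ω' := by
  intro ω ω'
  have tri : ∀ x : Ω, us x 0 > us x 1 ∨ us x 0 < us x 1 :=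
    fun x => (lt_or_gt_of_ne (hne x)).symm.imp id id
  rcases tri ω with h | h <;> rcases tri ω' with h' | h'
  · exact le_antisymm (ha ω' h' ω) (ha ω h ω')
  · exact aux_main q us ur hne hB P hP ha hb hc ω ω' h h'
  · exact (aux_main q us ur hne hB P hP ha hb hc ω' ω h' h).symm
  · exact le_antisymm (hb ω h ω') (hb ω' h' ω)
end

section
/- Let Ω, q, u_s, u_r be a binary-action information transmission setting in which no ω ∈ Ω satisfies u_s(ω,0) = u_s(ω,1), and assume B₀ ≥ 0 and B₁ ≤ 0 (the sender and the receiver are aligned). Define the outcome P* by P*(ω) = 1 for ω ∈ T⁰ and P*(ω) = 0 for ω ∈ T¹. Then P* is sender-incentive-compatible and receiver-obedient, and for every outcome P satisfying conditions (a), (b) and (c) one has U_s(P) ≤ U_s(P*) and U_r(P) ≤ U_r(P*). -/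
open Finset

/-- If the sender and the receiver are aligned (B₀ ≥ 0 and B₁ ≤ 0), the outcome P* that plays
the sender's preferred action in every state is sender-incentive-compatible and
receiver-obedient, and maximizes both players' expected utilities among all outcomes
satisfying conditions (a), (b) and (c). -/
theorem stmt_2 {Ω : Type*} [Fintype Ω] [Nonempty Ω]
    (q : Ω → ℝ) (hq0 : ∀ ω, 0 ≤ q ω) (hq1 : ∑ ω, q ω = 1)
    (us ur : Ω → Fin 2 → ℝ)
    (hne : ∀ ω : Ω, us ω 0 ≠ us ω 1)
    (hB0 : B0 q us ur ≥ 0) (hB1 : B1 q us ur ≤ 0)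
    (Pstar : Ω → ℝ)
    (hPstar : ∀ ω : Ω, Pstar ω = if us ω 0 > us ω 1 then 1 else 0) :
    senderIC us Pstar ∧ receiverObedient q ur Pstar ∧
      ∀ P : Ω → ℝ, (∀ ω, P ω ∈ Set.Icc (0 : ℝ) 1) →
        condA us P → condB us P → condC q ur P →
          Us q us P ≤ Us q us Pstar ∧ Ur q ur P ≤ Ur q ur Pstar := by
  have hlt : ∀ ω : Ω, ¬ us ω 0 > us ω 1 → us ω 0 < us ω 1 := fun ω h =>
    lt_of_le_of_ne (not_lt.mp h) (hne ω)
  refine ⟨?_, ⟨?_, ?_⟩, ?_⟩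
  · intro ω ω'
    rw [hPstar ω, hPstar ω']
    by_cases h1 : us ω 0 > us ω 1 <;> by_cases h2 : us ω' 0 > us ω' 1 <;>
      simp [h1, h2] <;> first | linarith | linarith [hlt ω h1] | linarith [hlt ω' h2]
  · have e1 : (∑ ω, q ω * Pstar ω * (ur ω 0 - ur ω 1)) = B0 q us ur := by
      unfold B0
      apply Finset.sum_congr rfl
      intro ω _
      rw [hPstar ω]
      split_ifs <;> ring
    rw [e1]; exact hB0
  · have e2 : (∑ ω, q ω * (1 - Pstar ω) * (ur ω 1 - ur ω 0)) = - B1 q us ur := by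
      unfold B1
      rw [← Finset.sum_neg_distrib]
      apply Finset.sum_congr rfl
      intro ω _
      rw [hPstar ω]
      split_ifs with h h' h''
      · exact absurd h' (lt_asymm h)
      · ring
      · ring
      · exact absurd (hlt ω h) h''
    rw [e2]; linarith
  · intro P hP hA hB hC
    constructor
    · unfold Us
      apply Finset.sum_le_sum
      intro ω _
      rcases hP ω with ⟨h0, h1⟩
      rw [hPstar ω]
      split_ifs with h
      · nlinarith [mul_nonneg (hq0 ω) (mul_nonneg (sub_nonneg.2 h1) (sub_nonneg.2 h.le))]
      · nlinarith [mul_nonneg (mul_nonneg (hq0 ω) h0) (sub_nonneg.2 (hlt ω h).le)]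
    · have key : Ur q ur Pstar - Ur q ur P
          = ∑ ω, q ω * (Pstar ω - P ω) * (ur ω 0 - ur ω 1) := by
        unfold Ur
        rw [← Finset.sum_sub_distrib]
        apply Finset.sum_congr rfl
        intro ω _
        ring
      rw [← sub_nonneg, key,
        ← Finset.sum_filter_add_sum_filter_not Finset.univ (fun ω => us ω 0 > us ω 1)]
      have hs0 : (0:ℝ) ≤ ∑ ω ∈ Finset.univ.filter (fun ω => us ω 0 > us ω 1),
          q ω * (Pstar ω - P ω) * (ur ω 0 - ur ω 1) := by
        rcases (Finset.univ.filter (fun ω => us ω 0 > us ω 1)).eq_empty_or_nonempty with he | ⟨ω₀, hω₀⟩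
        · rw [he, Finset.sum_empty]
        · simp only [Finset.mem_filter] at hω₀
          have hconst : ∀ ω, us ω 0 > us ω 1 → P ω = P ω₀ :=
            fun ω hω => le_antisymm (hA ω₀ hω₀.2 ω) (hA ω hω ω₀)
          have heq : (∑ ω ∈ Finset.univ.filter (fun ω => us ω 0 > us ω 1),
              q ω * (Pstar ω - P ω) * (ur ω 0 - ur ω 1))
              = (1 - P ω₀) * B0 q us ur := by
            have hb : B0 q us ur = ∑ ω ∈ Finset.univ.filter (fun ω => us ω 0 > us ω 1),
                q ω * (ur ω 0 - ur ω 1) := by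
              unfold B0
              rw [Finset.sum_filter]
            rw [hb, Finset.mul_sum]
            apply Finset.sum_congr rfl
            intro ω hω
            simp only [Finset.mem_filter] at hω
            rw [hPstar ω, if_pos hω.2, hconst ω hω.2]
            ring
          rw [heq]
          have := (hP ω₀).2
          exact mul_nonneg (by linarith) hB0
      have hs1 : (0:ℝ) ≤ ∑ ω ∈ Finset.univ.filter (fun ω => ¬ us ω 0 > us ω 1),
          q ω * (Pstar ω - P ω) * (ur ω 0 - ur ω 1) := by
        rcases (Finset.univ.filter (fun ω => ¬ us ω 0 > us ω 1)).eq_empty_or_nonempty with he | ⟨ω₁, hω₁⟩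
        · rw [he, Finset.sum_empty]
        · simp only [Finset.mem_filter] at hω₁
          have hω₁' := hlt ω₁ hω₁.2
          have hconst : ∀ ω, ¬ us ω 0 > us ω 1 → P ω = P ω₁ :=
            fun ω hω => le_antisymm (hB ω (hlt ω hω) ω₁) (hB ω₁ hω₁' ω)
          have heq : (∑ ω ∈ Finset.univ.filter (fun ω => ¬ us ω 0 > us ω 1),
              q ω * (Pstar ω - P ω) * (ur ω 0 - ur ω 1))
              = (- P ω₁) * B1 q us ur := by
            have hb : B1 q us ur = ∑ ω ∈ Finset.univ.filter (fun ω => ¬ us ω 0 > us ω 1),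
                q ω * (ur ω 0 - ur ω 1) := by
              unfold B1
              rw [Finset.sum_filter]
              apply Finset.sum_congr rfl
              intro ω _
              congr 1
              simp only [eq_iff_iff]
              exact ⟨fun h => not_lt.2 h.le, hlt ω⟩
            rw [hb, Finset.mul_sum]
            apply Finset.sum_congr rfl
            intro ω hω
            simp only [Finset.mem_filter] at hω
            rw [hPstar ω, if_neg hω.2, hconst ω hω.2]
            ring
          rw [heq]
          nlinarith [mul_nonneg (hP ω₁).1 (neg_nonneg.2 hB1)]
      linarith
end

section
/- Let Ω, q, u_s, u_r be a binary-action information transmission setting and let w : Ω × {0,1} → ℝ be positive and monotone over u_r and u_s. Let S be the set of outcomes P : Ω → [0,1] that are sender-incentive-compatible and receiver-obedient, and let U_w(P) = Σ_ω q(ω)·(P(ω)·w(ω,0) + (1−P(ω))·w(ω,1)). Then there exists P ∈ S maximizing U_w over S such that for some real numbers p₀, p₁ with 1 ≥ p₀ ≥ p₁ ≥ 0: P(ω) = p₀ whenever u_s(ω,0) > u_s(ω,1), or u_s(ω,0) = u_s(ω,1) and u_r(ω,0) > u_r(ω,1); and P(ω) = p₁ otherwise. -/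
open Finset

/-- Expected welfare of outcome P with respect to welfare function w. -/
def Uw {Ω : Type*} [Fintype Ω] (q : Ω → ℝ) (w : Ω → Fin 2 → ℝ) (P : Ω → ℝ) : ℝ :=
  ∑ ω, q ω * (P ω * w ω 0 + (1 - P ω) * w ω 1)

lemma senderIC_iff {Ω : Type*} (us : Ω → Fin 2 → ℝ) (P : Ω → ℝ) :
    senderIC us P ↔ ∀ ω ω' : Ω, 0 ≤ (P ω - P ω') * (us ω 0 - us ω 1) := by
  unfold senderIC
  constructor
  · intro h ω ω'; nlinarith [h ω ω']
  · intro h ω ω'; nlinarith [h ω ω']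

lemma round_lemma {Ω : Type*} [Fintype Ω] [Nonempty Ω]
    (q : Ω → ℝ) (hq0 : ∀ ω, 0 ≤ q ω)
    (us ur w : Ω → Fin 2 → ℝ)
    (hw_mono : ∀ ω a ω' a', ur ω a ≥ ur ω' a' → us ω a ≥ us ω' a' → w ω a ≥ w ω' a')
    (P : Ω → ℝ) (hP : ∀ ω, P ω ∈ Set.Icc (0:ℝ) 1) (hIC : senderIC us P)
    (hOb : receiverObedient q ur P) :
    ∃ p₀ p₁ : ℝ, 1 ≥ p₀ ∧ p₀ ≥ p₁ ∧ p₁ ≥ 0 ∧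
      ∀ Q : Ω → ℝ,
        (∀ ω, Q ω = if us ω 0 > us ω 1 ∨ (us ω 0 = us ω 1 ∧ ur ω 0 > ur ω 1) then p₀ else p₁) →
        (∀ ω, Q ω ∈ Set.Icc (0:ℝ) 1) ∧ senderIC us Q ∧ receiverObedient q ur Q ∧
          Uw q w P ≤ Uw q w Q := by
  classical
  have hIC' := (senderIC_iff us P).mp hIC
  set p₀ : ℝ := if h : ∃ ω, us ω 1 < us ω 0 then P h.choose else 1 with hp₀def
  set p₁ : ℝ := if h : ∃ ω, us ω 0 < us ω 1 then P h.choose else 0 with hp₁def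
  have hge : ∀ ω, P ω ≤ p₀ := by
    intro ω
    rw [hp₀def]
    split
    · next h =>
      have hc := h.choose_spec
      have := hIC' h.choose ω
      nlinarith
    · exact (hP ω).2
  have hle : ∀ ω, p₁ ≤ P ω := by
    intro ω
    rw [hp₁def]
    split
    · next h =>
      have hc := h.choose_spec
      have := hIC' h.choose ω
      nlinarith
    · exact (hP ω).1
  have heq0 : ∀ ω, us ω 1 < us ω 0 → P ω = p₀ := by
    intro ω hω
    have h : ∃ ω, us ω 1 < us ω 0 := ⟨ω, hω⟩
    have h1 : p₀ = P h.choose := by rw [hp₀def, dif_pos h]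
    have := hIC' ω h.choose
    have h2 := hge ω
    rw [h1] at h2 ⊢
    nlinarith
  have heq1 : ∀ ω, us ω 0 < us ω 1 → P ω = p₁ := by
    intro ω hω
    have h : ∃ ω, us ω 0 < us ω 1 := ⟨ω, hω⟩
    have h1 : p₁ = P h.choose := by rw [hp₁def, dif_pos h]
    have := hIC' ω h.choose
    have h2 := hle ω
    rw [h1] at h2 ⊢
    nlinarith
  have hp1le : p₀ ≤ 1 := by
    rw [hp₀def]; split
    · next h => exact (hP h.choose).2
    · exact le_refl 1
  have hp10 : 0 ≤ p₁ := by
    rw [hp₁def]; split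
    · next h => exact (hP h.choose).1
    · exact le_refl 0
  obtain ⟨x⟩ := ‹Nonempty Ω›
  have hp01 : p₁ ≤ p₀ := le_trans (hle x) (hge x)
  refine ⟨p₀, p₁, hp1le, hp01, hp10, ?_⟩
  intro Q hQ
  -- pointwise facts
  have key : ∀ ω, 0 ≤ (Q ω - P ω) * (ur ω 0 - ur ω 1) ∧
      0 ≤ (Q ω - P ω) * (w ω 0 - w ω 1) := by
    intro ω
    rcases lt_trichotomy (us ω 0) (us ω 1) with hlt | heq | hgt
    · have hA : ¬(us ω 0 > us ω 1 ∨ (us ω 0 = us ω 1 ∧ ur ω 0 > ur ω 1)) := by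
        push_neg
        exact ⟨hlt.le, fun h => absurd h (ne_of_lt hlt)⟩
      have : Q ω = p₁ := by rw [hQ ω, if_neg hA]
      rw [this, ← heq1 ω hlt]
      simp
    · by_cases hur : ur ω 1 < ur ω 0
      · have hA : us ω 0 > us ω 1 ∨ (us ω 0 = us ω 1 ∧ ur ω 0 > ur ω 1) := Or.inr ⟨heq, hur⟩
        have hQω : Q ω = p₀ := by rw [hQ ω, if_pos hA]
        have hd : 0 ≤ Q ω - P ω := by rw [hQω]; linarith [hge ω]
        have hwge : w ω 1 ≤ w ω 0 := hw_mono ω 0 ω 1 hur.le (le_of_eq heq.symm)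
        exact ⟨mul_nonneg hd (by linarith), mul_nonneg hd (by linarith)⟩
      · have hA : ¬(us ω 0 > us ω 1 ∨ (us ω 0 = us ω 1 ∧ ur ω 0 > ur ω 1)) := by
          push_neg
          exact ⟨heq.le, fun _ => not_lt.mp hur⟩
        have hQω : Q ω = p₁ := by rw [hQ ω, if_neg hA]
        have hd : Q ω - P ω ≤ 0 := by rw [hQω]; linarith [hle ω]
        have hwle : w ω 0 ≤ w ω 1 := hw_mono ω 1 ω 0 (not_lt.mp hur) (le_of_eq heq)
        have hur' : ur ω 0 ≤ ur ω 1 := not_lt.mp hur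
        constructor <;> nlinarith
    · have hA : us ω 0 > us ω 1 ∨ (us ω 0 = us ω 1 ∧ ur ω 0 > ur ω 1) := Or.inl hgt
      have : Q ω = p₀ := by rw [hQ ω, if_pos hA]
      rw [this, ← heq0 ω hgt]
      simp
  have hQicc : ∀ ω, Q ω ∈ Set.Icc (0:ℝ) 1 := by
    intro ω
    rw [hQ ω]
    split
    · exact ⟨le_trans hp10 hp01, hp1le⟩
    · exact ⟨hp10, le_trans hp01 hp1le⟩
  have hQIC : senderIC us Q := by
    rw [senderIC_iff]
    intro ω ω'
    rcases lt_trichotomy (us ω 0) (us ω 1) with hlt | heq | hgt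
    · have hA : ¬(us ω 0 > us ω 1 ∨ (us ω 0 = us ω 1 ∧ ur ω 0 > ur ω 1)) := by
        push_neg
        exact ⟨hlt.le, fun h => absurd h (ne_of_lt hlt)⟩
      have h1 : Q ω = p₁ := by rw [hQ ω, if_neg hA]
      have h2 : p₁ ≤ Q ω' := by rw [hQ ω']; split <;> [exact hp01; exact le_refl _]
      have h3 : Q ω ≤ Q ω' := by rw [h1]; linarith
      nlinarith
    · rw [heq]; simp
    · have hA : us ω 0 > us ω 1 ∨ (us ω 0 = us ω 1 ∧ ur ω 0 > ur ω 1) := Or.inl hgt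
      have h1 : Q ω = p₀ := by rw [hQ ω, if_pos hA]
      have h2 : Q ω' ≤ p₀ := by rw [hQ ω']; split <;> [exact le_refl _; exact hp01]
      apply mul_nonneg <;> [rw [h1]; skip] <;> linarith
  have hQob : receiverObedient q ur Q := by
    constructor
    · refine le_trans hOb.1 (Finset.sum_le_sum fun ω _ => ?_)
      have := mul_nonneg (hq0 ω) (key ω).1
      nlinarith
    · refine le_trans hOb.2 (Finset.sum_le_sum fun ω _ => ?_)
      have := mul_nonneg (hq0 ω) (key ω).1
      nlinarith
  have hQuw : Uw q w P ≤ Uw q w Q := by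
    refine Finset.sum_le_sum fun ω _ => ?_
    have := mul_nonneg (hq0 ω) (key ω).2
    nlinarith
  exact ⟨hQicc, hQIC, hQob, hQuw⟩

section exist
variable {Ω : Type*} [Fintype Ω]

lemma feasible_nonempty (q : Ω → ℝ) (us ur : Ω → Fin 2 → ℝ) :
    ∃ P : Ω → ℝ, (∀ ω, P ω ∈ Set.Icc (0:ℝ) 1) ∧ senderIC us P ∧ receiverObedient q ur P := by
  by_cases hD : 0 ≤ ∑ ω, q ω * (ur ω 0 - ur ω 1)
  · refine ⟨fun _ => 1, fun ω => ⟨zero_le_one, le_refl 1⟩, fun ω ω' => le_refl _, ?_, ?_⟩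
    · calc (0:ℝ) ≤ ∑ ω, q ω * (ur ω 0 - ur ω 1) := hD
        _ = ∑ ω, q ω * (fun _ => (1:ℝ)) ω * (ur ω 0 - ur ω 1) :=
          Finset.sum_congr rfl fun ω _ => by ring
    · have : ∀ ω : Ω, q ω * (1 - (fun _ => (1:ℝ)) ω) * (ur ω 1 - ur ω 0) = 0 := fun ω => by
        simp
      rw [Finset.sum_congr rfl fun ω _ => this ω]
      simp
  · refine ⟨fun _ => 0, fun ω => ⟨le_refl 0, zero_le_one⟩, fun ω ω' => le_refl _, ?_, ?_⟩
    · have : ∀ ω : Ω, q ω * (fun _ => (0:ℝ)) ω * (ur ω 0 - ur ω 1) = 0 := fun ω => by simp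
      rw [Finset.sum_congr rfl fun ω _ => this ω]
      simp
    · have h : ∑ ω, q ω * (1 - (fun _ => (0:ℝ)) ω) * (ur ω 1 - ur ω 0)
          = -∑ ω, q ω * (ur ω 0 - ur ω 1) := by
        rw [← Finset.sum_neg_distrib]
        exact Finset.sum_congr rfl fun ω _ => by ring
      rw [h]
      linarith [not_le.mp hD]

lemma feasible_compact (q : Ω → ℝ) (us ur : Ω → Fin 2 → ℝ) :
    IsCompact {P : Ω → ℝ | (∀ ω, P ω ∈ Set.Icc (0:ℝ) 1) ∧ senderIC us P ∧
      receiverObedient q ur P} := by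
  have hA : IsClosed {P : Ω → ℝ | ∀ ω, P ω ∈ Set.Icc (0:ℝ) 1} := by
    have h : {P : Ω → ℝ | ∀ ω, P ω ∈ Set.Icc (0:ℝ) 1}
        = ⋂ ω, (fun P : Ω → ℝ => P ω) ⁻¹' Set.Icc (0:ℝ) 1 := by
      ext P; simp
    rw [h]
    exact isClosed_iInter fun ω => isClosed_Icc.preimage (continuous_apply ω)
  have hB : IsClosed {P : Ω → ℝ | senderIC us P} := by
    have h : {P : Ω → ℝ | senderIC us P} = ⋂ ω, ⋂ ω', {P : Ω → ℝ |
        P ω' * us ω 0 + (1 - P ω') * us ω 1 ≤ P ω * us ω 0 + (1 - P ω) * us ω 1} := by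
      ext P; simp [senderIC, ge_iff_le]
    rw [h]
    refine isClosed_iInter fun ω => isClosed_iInter fun ω' => isClosed_le ?_ ?_ <;> fun_prop
  have hC : IsClosed {P : Ω → ℝ | receiverObedient q ur P} := by
    have h : {P : Ω → ℝ | receiverObedient q ur P} =
        {P : Ω → ℝ | 0 ≤ ∑ ω, q ω * P ω * (ur ω 0 - ur ω 1)} ∩
        {P : Ω → ℝ | 0 ≤ ∑ ω, q ω * (1 - P ω) * (ur ω 1 - ur ω 0)} := by
      ext P; simp [receiverObedient, ge_iff_le]
    rw [h]
    refine IsClosed.inter ?_ ?_ <;>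
      refine isClosed_le continuous_const ?_ <;>
      exact continuous_finset_sum _ fun ω _ => by fun_prop
  have hclosed : IsClosed {P : Ω → ℝ | (∀ ω, P ω ∈ Set.Icc (0:ℝ) 1) ∧ senderIC us P ∧
      receiverObedient q ur P} := by
    have h : {P : Ω → ℝ | (∀ ω, P ω ∈ Set.Icc (0:ℝ) 1) ∧ senderIC us P ∧
        receiverObedient q ur P} = {P : Ω → ℝ | ∀ ω, P ω ∈ Set.Icc (0:ℝ) 1} ∩
        ({P : Ω → ℝ | senderIC us P} ∩ {P : Ω → ℝ | receiverObedient q ur P}) := by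
      ext P; simp [Set.mem_setOf_eq, Set.mem_inter_iff, and_assoc]
    rw [h]
    exact hA.inter (hB.inter hC)
  have hpi : IsCompact (Set.pi Set.univ fun _ : Ω => Set.Icc (0:ℝ) 1) :=
    isCompact_univ_pi fun _ => isCompact_Icc
  refine IsCompact.of_isClosed_subset hpi hclosed ?_
  intro P hP ω _
  exact hP.1 ω

lemma Uw_continuous (q : Ω → ℝ) (w : Ω → Fin 2 → ℝ) : Continuous (Uw q w) := by
  unfold Uw
  exact continuous_finset_sum _ fun ω _ => by fun_prop

end exist

/-- For any positive welfare function w monotone over u_r and u_s, there is an outcome that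
maximizes expected welfare among all sender-incentive-compatible and receiver-obedient
outcomes and takes only two values p₀ ≥ p₁, with P(ω) = p₀ exactly when the sender strictly
prefers 0, or is indifferent and the receiver strictly prefers 0. -/
theorem stmt_3 {Ω : Type*} [Fintype Ω] [Nonempty Ω]
    (q : Ω → ℝ) (hq0 : ∀ ω, 0 ≤ q ω) (hq1 : ∑ ω, q ω = 1)
    (us ur w : Ω → Fin 2 → ℝ)
    (hw_pos : ∀ ω a, 0 < w ω a)
    (hw_mono : ∀ ω a ω' a', ur ω a ≥ ur ω' a' → us ω a ≥ us ω' a' → w ω a ≥ w ω' a') :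
    ∃ P : Ω → ℝ,
      (∀ ω, P ω ∈ Set.Icc (0 : ℝ) 1) ∧ senderIC us P ∧ receiverObedient q ur P ∧
      (∀ P' : Ω → ℝ, (∀ ω, P' ω ∈ Set.Icc (0 : ℝ) 1) → senderIC us P' →
        receiverObedient q ur P' → Uw q w P' ≤ Uw q w P) ∧
      ∃ p₀ p₁ : ℝ, 1 ≥ p₀ ∧ p₀ ≥ p₁ ∧ p₁ ≥ 0 ∧
        ∀ ω : Ω,
          P ω = if us ω 0 > us ω 1 ∨ (us ω 0 = us ω 1 ∧ ur ω 0 > ur ω 1) then p₀ else p₁ := by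


  classical
  obtain ⟨P₀, hP₀⟩ := feasible_nonempty q us ur
  have hcomp := feasible_compact q us ur
  obtain ⟨P, hPS, hmax'⟩ := hcomp.exists_isMaxOn ⟨P₀, hP₀⟩
    (Uw_continuous q w).continuousOn
  have hmax : ∀ P' ∈ {P : Ω → ℝ | (∀ ω, P ω ∈ Set.Icc (0:ℝ) 1) ∧ senderIC us P ∧
      receiverObedient q ur P}, Uw q w P' ≤ Uw q w P := fun P' hP' => hmax' hP'
  obtain ⟨p₀, p₁, h1, h2, h3, hQ⟩ :=
    round_lemma q hq0 us ur w hw_mono P hPS.1 hPS.2.1 hPS.2.2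
  set Q : Ω → ℝ := fun ω =>
    if us ω 0 > us ω 1 ∨ (us ω 0 = us ω 1 ∧ ur ω 0 > ur ω 1) then p₀ else p₁ with hQdef
  obtain ⟨hQicc, hQIC, hQob, hQuw⟩ := hQ Q fun ω => rfl
  refine ⟨Q, hQicc, hQIC, hQob, ?_, p₀, p₁, h1, h2, h3, fun ω => rfl⟩
  intro P' h1' h2' h3'
  exact le_trans (hmax P' ⟨h1', h2', h3'⟩) hQuw
end

section
/- Let B₀ and B₁ be real numbers such that B₀ < 0 or B₁ > 0. Then every feasible pair (p₀, p₁) satisfies p₀ = p₁. -/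
/-- A pair (p₀, p₁) is feasible if 0 ≤ p₁ ≤ p₀ ≤ 1 and p₀·B₀ + p₁·B₁ ≥ max(0, B₀ + B₁). -/
def Feasible (B₀ B₁ p₀ p₁ : ℝ) : Prop :=
  0 ≤ p₁ ∧ p₁ ≤ p₀ ∧ p₀ ≤ 1 ∧ p₀ * B₀ + p₁ * B₁ ≥ max 0 (B₀ + B₁)

/-- If B₀ < 0 or B₁ > 0, every feasible pair satisfies p₀ = p₁. -/
theorem stmt_8 (B₀ B₁ : ℝ) (hB : B₀ < 0 ∨ B₁ > 0)
    (p₀ p₁ : ℝ) (hfeas : Feasible B₀ B₁ p₀ p₁) : p₀ = p₁ := by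
  obtain ⟨h1, h2, h3, h4⟩ := hfeas
  have hm1 : (0:ℝ) ≤ max 0 (B₀ + B₁) := le_max_left _ _
  have hm2 : B₀ + B₁ ≤ max 0 (B₀ + B₁) := le_max_right _ _
  rcases hB with hb | hb
  · nlinarith [mul_nonneg h1 hm1, mul_le_mul_of_nonneg_left hm2 h1]
  · nlinarith [mul_nonneg (h1.trans h2) hm1, mul_le_mul_of_nonneg_left hm2 (h1.trans h2)]
end
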